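/- For A = {a,b,c} and the profile σ with k voters ranking a≻b≻c, k voters ranking a≻c≻b, and k voters ranking b≻c≻a, where k ≥ 2, the expected Kendall-Tau disagreement of plurality across a random split satisfies E[KT(f_p(σ^(1)), f_p(σ^(2)))] ≤ 1 + 2^{−2k} + 2^{−k} ≤ 1.3125. -/

import Mathlib

open scoped Classical

noncomputable section

/-- A strict ranking of the alternatives `A` among `m` positions: each alternative is
assigned its (0-indexed) position. -/
abbrev Ranking (A : Type*) (m : ℕ) := A ≃ Fin m

/-- A weak ranking: a complete and transitive binary relation (ties allowed).
`ge a b` means `a` is ranked weakly above `b`. -/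
structure WeakRanking (A : Type*) where
  ge : A → A → Prop
  total : ∀ a b, ge a b ∨ ge b a
  trans : ∀ a b c, ge a b → ge b c → ge a c

namespace WeakRanking

variable {A : Type*}

/-- `a` is ranked strictly above `b`. -/
def strict (r : WeakRanking A) (a b : A) : Prop := r.ge a b ∧ ¬ r.ge b a

/-- `a` and `b` are tied. -/
def tied (r : WeakRanking A) (a b : A) : Prop := r.ge a b ∧ r.ge b a

/-- The reversed weak ranking. -/
def rev (r : WeakRanking A) : WeakRanking A where
  ge a b := r.ge b a
  total a b := r.total b a
  trans _ _ _ h1 h2 := r.trans _ _ _ h2 h1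

/-- The all-tied weak ranking. -/
def allTied (A : Type*) : WeakRanking A :=
  ⟨fun _ _ => True, fun _ _ => Or.inl trivial, fun _ _ _ _ _ => trivial⟩

end WeakRanking

variable {A : Type*} {m : ℕ}

/-- The weak ranking induced by a strict ranking (smaller position = ranked higher). -/
def Ranking.toWeak (r : Ranking A m) : WeakRanking A where
  ge a b := r a ≤ r b
  total a b := le_total _ _
  trans _ _ _ h1 h2 := le_trans h1 h2

/-- The position-reversal permutation. -/
def finRevPerm (m : ℕ) : Equiv.Perm (Fin m) :=
  ⟨Fin.rev, Fin.rev, Fin.rev_rev, Fin.rev_rev⟩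

/-- The reversed strict ranking. -/
def Ranking.revR (r : Ranking A m) : Ranking A m := r.trans (finRevPerm m)

/-- Kendall-Tau distance with ties between two weak rankings: the sum over unordered pairs
of distinct alternatives of `D + T/2`, realized as half the sum over ordered pairs. -/
def KT [Fintype A] (r1 r2 : WeakRanking A) : ℝ :=
  (∑ p ∈ Finset.univ.offDiag,
      ((if (r1.strict p.1 p.2 ∧ r2.strict p.2 p.1) ∨ (r1.strict p.2 p.1 ∧ r2.strict p.1 p.2)
          then (1 : ℝ) else 0)
        + (if r1.tied p.1 p.2 ∨ r2.tied p.1 p.2 then (1 : ℝ) else 0) / 2)) / 2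

/-- A profile: the list of the voters' strict rankings. -/
abbrev Profile (A : Type*) (m : ℕ) := List (Ranking A m)

/-- A social welfare function. -/
abbrev SWF (A : Type*) (m : ℕ) := Profile A m → WeakRanking A

/-- Reverse every voter's ranking. -/
def revProfile (σ : Profile A m) : Profile A m := σ.map Ranking.revR

/-- A monotone positional scoring vector `1 = s₁ ≥ s₂ ≥ … ≥ sₘ = 0`. -/
structure ScoreVec (m : ℕ) where
  s : Fin m → ℝ
  anti : Antitone s
  first : ∀ h : 0 < m, s ⟨0, h⟩ = 1
  last : ∀ h : 0 < m, s ⟨m - 1, Nat.sub_lt h Nat.one_pos⟩ = 0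

/-- Total score of alternative `a` in profile `σ`. -/
def totalScore (sv : ScoreVec m) (σ : Profile A m) (a : A) : ℝ :=
  (σ.map fun r => sv.s (r a)).sum

/-- The positional scoring rule associated to a scoring vector. -/
def posSWF (sv : ScoreVec m) : SWF A m := fun σ =>
  { ge := fun a b => totalScore sv σ b ≤ totalScore sv σ a
    total := fun _ _ => le_total _ _
    trans := fun _ _ _ h1 h2 => le_trans h2 h1 }

/-- The plurality scoring vector `(1,0,…,0)`. -/
def pluralityVec (m : ℕ) (hm : 2 ≤ m) : ScoreVec m where
  s i := if i.val = 0 then 1 else 0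
  anti := by
    intro i j hij
    have h' : i.val ≤ j.val := hij
    dsimp only
    by_cases hj : j.val = 0
    · have hi : i.val = 0 := by omega
      simp [hi, hj]
    · by_cases hi : i.val = 0 <;> simp [hi, hj]
  first h := by simp
  last h := by
    have h' : m - 1 ≠ 0 := by omega
    simp [h']

/-- The veto scoring vector `(1,…,1,0)`. -/
def vetoVec (m : ℕ) (hm : 2 ≤ m) : ScoreVec m where
  s i := if i.val = m - 1 then 0 else 1
  anti := by
    intro i j hij
    have h' : i.val ≤ j.val := hij
    dsimp only
    by_cases hi : i.val = m - 1
    · have hj : j.val = m - 1 := by have := j.isLt; omega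
      simp [hi, hj]
    · by_cases hj : j.val = m - 1 <;> simp [hi, hj]
  first h := by
    have h' : (0 : ℕ) ≠ m - 1 := by omega
    simp [h']
  last h := by simp

/-- The reverse scoring vector, `s'_j = 1 - s_{m+1-j}`. -/
def ScoreVec.revVec (sv : ScoreVec m) : ScoreVec m where
  s j := 1 - sv.s j.rev
  anti := by
    intro i j hij
    have h1 : j.rev ≤ i.rev := by
      simp only [Fin.le_def, Fin.val_rev]
      have h' : i.val ≤ j.val := hij
      omega
    have h2 := sv.anti h1
    dsimp only
    linarith
  first h := by
    have h1 : (⟨0, h⟩ : Fin m).rev = ⟨m - 1, Nat.sub_lt h Nat.one_pos⟩ := by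
      ext
      simp [Fin.val_rev]
    rw [h1, sv.last h]
    ring
  last h := by
    have h1 : (⟨m - 1, Nat.sub_lt h Nat.one_pos⟩ : Fin m).rev = ⟨0, h⟩ := by
      ext
      simp only [Fin.val_rev]
      omega
    rw [h1, sv.first h]
    ring

/-- One side of the split of the profile `σ` given by assignment `β`. -/
def subProfile (σ : Profile A m) (β : Fin σ.length → Bool) (b : Bool) : Profile A m :=
  ((List.finRange σ.length).filter fun i => β i == b).map σ.get

/-- Apply an SWF, producing the all-tied ranking on an empty (sub)profile. -/
def applySplit (f : SWF A m) (σ : Profile A m) : WeakRanking A :=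
  if σ = [] then WeakRanking.allTied A else f σ

/-- Expected Kendall-Tau disagreement of `f` between the two sides of a uniformly random
split of `σ` (each voter placed independently and uniformly on one of the two sides). -/
def expDisagree [Fintype A] (f : SWF A m) (σ : Profile A m) : ℝ :=
  (∑ β : Fin σ.length → Bool,
      KT (applySplit f (subProfile σ β true)) (applySplit f (subProfile σ β false)))
    / 2 ^ σ.length

/-- Aggregation by Consistency over a set of SWFs: the rules minimizing expected
disagreement across a random split. -/
def AbC [Fintype A] (F : Set (SWF A m)) (σ : Profile A m) : Set (SWF A m) :=
  {f | f ∈ F ∧ ∀ g ∈ F, expDisagree f σ ≤ expDisagree g σ}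

/-- Aggregation by Consistency over a set of positional scoring vectors. -/
def AbCVec [Fintype A] (F : Set (ScoreVec m)) (σ : Profile A m) : Set (ScoreVec m) :=
  {sv | sv ∈ F ∧ ∀ sv' ∈ F, expDisagree (posSWF sv) σ ≤ expDisagree (posSWF sv') σ}

/-- All permutations of the positions that fix every position outside `S`. -/
def permsOn (S : Finset (Fin m)) : List (Equiv.Perm (Fin m)) :=
  (Finset.univ.filter fun π : Equiv.Perm (Fin m) => ∀ i ∉ S, π i = i).toList

/-- The `k`-shuffling of profile `σ` with respect to the set of positions `S`: each voter's
ranking is replaced by `k·m!` copies, split evenly among the `|S|!` permutations of `S`. -/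
def shuffle (S : Finset (Fin m)) (k : ℕ) (σ : Profile A m) : Profile A m :=
  σ.flatMap fun r =>
    (permsOn S).flatMap fun π =>
      List.replicate (k * Nat.factorial m / Nat.factorial S.card) (r.trans π)

/-- The positions `2,…,m` (0-indexed: `1,…,m-1`). -/
def tailPositions (m : ℕ) : Finset (Fin m) := Finset.univ.filter fun i => 1 ≤ i.val

/-- Number of voters ranking `a` first. -/
def topCount (σ : Profile A m) (a : A) : ℕ := σ.countP fun r => (r a).val == 0

/-- A weak ranking has no ties among distinct alternatives. -/
def NoTies (w : WeakRanking A) : Prop := ∀ a b : A, a ≠ b → ¬ w.tied a b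

/-- Probability (over a uniformly random split of `σ`) that the outputs of `f` on the two
sides order `a` and `b` strictly oppositely. -/
def probD [Fintype A] (f : SWF A m) (σ : Profile A m) (a b : A) : ℝ :=
  ((Finset.univ.filter fun β : Fin σ.length → Bool =>
      ((applySplit f (subProfile σ β true)).strict a b ∧
        (applySplit f (subProfile σ β false)).strict b a) ∨
      ((applySplit f (subProfile σ β true)).strict b a ∧
        (applySplit f (subProfile σ β false)).strict a b)).card : ℝ) / 2 ^ σ.length

/-- Probability (over a uniformly random split of `σ`) that `a` and `b` are tied in the
output of `f` on at least one side. -/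
def probT [Fintype A] (f : SWF A m) (σ : Profile A m) (a b : A) : ℝ :=
  ((Finset.univ.filter fun β : Fin σ.length → Bool =>
      (applySplit f (subProfile σ β true)).tied a b ∨
      (applySplit f (subProfile σ β false)).tied a b).card : ℝ) / 2 ^ σ.length

/-- A rule picking rule over sets of positional scoring vectors. -/
abbrev RPRVec (A : Type*) (m : ℕ) := Set (ScoreVec m) → Profile A m → Set (ScoreVec m)

/-- An RPR returns a nonempty subset of the candidate rules. -/
def IsRPR (Z : RPRVec A m) : Prop := ∀ F σ, Z F σ ⊆ F ∧ (Z F σ).Nonempty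

/-- Anonymity of an RPR: invariance under permuting voters. -/
def AnonymousRPR (Z : RPRVec A m) : Prop :=
  ∀ (F : Set (ScoreVec m)) (σ σ' : Profile A m), σ.Perm σ' → Z F σ = Z F σ'

/-- Reversal symmetry of an RPR. -/
def ReversalSymmetric (Z : RPRVec A m) : Prop :=
  ∀ F : Set (ScoreVec m), ScoreVec.revVec '' F = F →
    ∀ σ : Profile A m, ScoreVec.revVec '' (Z F σ) = Z F (revProfile σ)

/-- Plurality-shuffling consistency of an RPR. -/
def PSConsistent (hm : 2 ≤ m) (Z : RPRVec A m) : Prop :=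
  ∀ F : Set (ScoreVec m), F.Finite → pluralityVec m hm ∈ F →
    ∀ σ : Profile A m, NoTies (posSWF (pluralityVec m hm) σ) →
      ∃ k : ℕ, 1 ≤ k ∧ ∀ k', k ≤ k' →
        Z F (shuffle (tailPositions m) k' σ) = {pluralityVec m hm}

/-- Union consistency of an RPR. -/
def UnionConsistent (Z : RPRVec A m) : Prop :=
  ∀ (F : Set (ScoreVec m)) (σa σb : Profile A m), (Z F σa ∩ Z F σb).Nonempty →
    Z F (σa ++ σb) = Z F σa ∩ Z F σb

/-- The welfare-maximizing RPR with utility function `u`. -/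
def welfareMax (u : Ranking A m → WeakRanking A → ℝ) : RPRVec A m := fun F σ =>
  {sv | sv ∈ F ∧ ∀ sv' ∈ F,
      (σ.map fun r => u r (posSWF sv' σ)).sum ≤ (σ.map fun r => u r (posSWF sv σ)).sum}

/-- The SWF induced by a (vector-valued) RPR, where it is singleton-valued. -/
def inducedVec (Z : RPRVec A m) (F : Set (ScoreVec m)) : SWF A m := fun σ =>
  if h : ∃ sv, Z F σ = {sv} then posSWF h.choose σ else WeakRanking.allTied A

/-- The SWF induced by an (SWF-valued) RPR, where it is singleton-valued. -/
def inducedSWF (Z : Set (SWF A m) → Profile A m → Set (SWF A m)) (F : Set (SWF A m)) :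
    SWF A m := fun σ =>
  if h : ∃ f, Z F σ = {f} then h.choose σ else WeakRanking.allTied A

/-- The SWF induced by AbC over scoring vectors. -/
def inducedAbCVec [Fintype A] (F : Set (ScoreVec m)) : SWF A m := fun σ =>
  if h : ∃ sv, AbCVec F σ = {sv} then posSWF h.choose σ else WeakRanking.allTied A

/-- Anonymity of an SWF. -/
def AnonymousSWF (f : SWF A m) : Prop :=
  ∀ σ σ' : Profile A m, σ.Perm σ' → f σ = f σ'

/-- Relabeling of a weak ranking along a permutation of the alternatives. -/
def permuteWeak (π : Equiv.Perm A) (w : WeakRanking A) : WeakRanking A where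
  ge a b := w.ge (π.symm a) (π.symm b)
  total a b := w.total _ _
  trans _ _ _ h1 h2 := w.trans _ _ _ h1 h2

/-- Neutrality of an SWF: permuting the alternatives permutes the output accordingly. -/
def NeutralSWF (f : SWF A m) : Prop :=
  ∀ (π : Equiv.Perm A) (σ : Profile A m),
    f (σ.map fun r => π.symm.trans r) = permuteWeak π (f σ)

/-- `a` pairwise defeats `b` in profile `σ`. -/
def pairwiseDefeats (σ : Profile A m) (a b : A) : Prop :=
  (σ.countP fun r => decide (r b < r a)) < (σ.countP fun r => decide (r a < r b))

/-- A set `S` is dominant if every member pairwise defeats every non-member. -/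
def DominantSet [Fintype A] (σ : Profile A m) (S : Finset A) : Prop :=
  ∀ a ∈ S, ∀ b ∉ S, pairwiseDefeats σ a b

/-- The Smith set: the smallest dominant set (the intersection of all dominant sets). -/
def SmithSet [Fintype A] (σ : Profile A m) : Finset A :=
  Finset.univ.filter fun a => ∀ S : Finset A, DominantSet σ S → a ∈ S

/-- `a` is among the top-ranked alternatives of `w`. -/
def isTop (w : WeakRanking A) (a : A) : Prop := ∀ b, w.ge a b

def SmithCriterion [Fintype A] (f : SWF A m) : Prop :=
  ∀ (σ : Profile A m) (a : A), isTop (f σ) a → a ∈ SmithSet σ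

def CondorcetConsistent [Fintype A] (f : SWF A m) : Prop :=
  ∀ (σ : Profile A m) (c : A), SmithSet σ = {c} →
    ∀ a, isTop (f σ) a → a ∈ SmithSet σ

def MajorityWinnerCriterion [Fintype A] (f : SWF A m) : Prop :=
  ∀ (σ : Profile A m) (c : A), SmithSet σ = {c} → σ.length < 2 * topCount σ c →
    ∀ a, isTop (f σ) a → a ∈ SmithSet σ

def PairwiseMajorityConsistent (f : SWF A m) : Prop :=
  ∀ (σ : Profile A m) (r : WeakRanking A),
    (∀ a b, r.strict a b ↔ pairwiseDefeats σ a b) → f σ = r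

def UnanimousSWF (f : SWF A m) : Prop :=
  ∀ (σ : Profile A m) (r : Ranking A m), σ ≠ [] → (∀ x ∈ σ, x = r) →
    f σ = Ranking.toWeak r

/-- Rank of `a` in weak ranking `w`: one plus the number of alternatives strictly above. -/
def rankIn [Fintype A] (w : WeakRanking A) (a : A) : ℕ :=
  1 + (Finset.univ.filter fun b => w.strict b a).card

/-- `r'` is obtained from `r` by (weakly) raising `a`, everything else unchanged. -/
def RaisesWeak (a : A) (r r' : Ranking A m) : Prop :=
  r' a ≤ r a ∧ ∀ b c : A, b ≠ a → c ≠ a → (r b < r c ↔ r' b < r' c)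

/-- Monotonicity of an SWF: raising an alternative never hurts its rank. -/
def MonotonicSWF [Fintype A] (f : SWF A m) : Prop :=
  ∀ (a : A) (σ σ' : Profile A m), List.Forall₂ (RaisesWeak a) σ σ' →
    rankIn (f σ') a ≤ rankIn (f σ) a

/-- Total score of `a` for a list of (position ↦ alternative) ballots of length `ℓ`. -/
def ballotScore [Fintype A] {ℓ : ℕ} (sv : ScoreVec ℓ) (P : List (Fin ℓ → A)) (a : A) : ℝ :=
  (P.map fun b => ∑ i : Fin ℓ, if b i = a then sv.s i else 0).sum

/-- A scoring vector achieves perfect consistency on the given split `(P1, P2)`. -/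
def PerfectConsistency [Fintype A] {ℓ : ℕ} (sv : ScoreVec ℓ)
    (P1 P2 : List (Fin ℓ → A)) : Prop :=
  ∀ a b : A, a ≠ b →
    0 < (ballotScore sv P1 a - ballotScore sv P1 b) *
        (ballotScore sv P2 a - ballotScore sv P2 b)

/-- Complete a `k`-partial ballot to a full ballot on `m` positions by placing the missing
alternatives at the bottom, in a fixed order. -/
def completeBallot [Fintype A] [LinearOrder A] {k m : ℕ} (hk : 0 < k)
    (b : Fin k → A) : Fin m → A := fun j =>
  if h : j.val < k then b ⟨j.val, h⟩
  else ((Finset.univ \ Finset.univ.image b).sort (· ≤ ·)).getD (j.val - k) (b ⟨0, hk⟩)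

/-- `k`-shuffling for (position ↦ alternative) ballots. -/
def shuffleBallots {m : ℕ} (S : Finset (Fin m)) (k : ℕ) (P : List (Fin m → A)) :
    List (Fin m → A) :=
  P.flatMap fun f =>
    (permsOn S).flatMap fun π =>
      List.replicate (k * Nat.factorial m / Nat.factorial S.card) (f ∘ π.symm)


-- Concrete setup for STATEMENTS 13 and 14: alternatives `A = Fin 3` with `a = 0`,
-- `b = 1`, `c = 2`; rankings are given as (alternative ↦ position) bijections.

/-- a ≻ b ≻ c -/
def rABC : Ranking (Fin 3) 3 := Equiv.ofBijective ![0, 1, 2] (by decide)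
/-- a ≻ c ≻ b -/
def rACB : Ranking (Fin 3) 3 := Equiv.ofBijective ![0, 2, 1] (by decide)
/-- b ≻ c ≻ a -/
def rBCA : Ranking (Fin 3) 3 := Equiv.ofBijective ![2, 0, 1] (by decide)

/-- The profile with k voters a≻b≻c, k voters a≻c≻b, and k voters b≻c≻a. -/
def sigmaK (k : ℕ) : Profile (Fin 3) 3 :=
  List.replicate k rABC ++ List.replicate k rACB ++ List.replicate k rBCA

/-!
No voter ranks `c` first, so `c` has plurality score `0` on both sides of every split and is
never ranked strictly above `a` or `b`. The pairs `{a, c}` and `{b, c}` therefore contribute only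
through ties, and a tie of `x ∈ {a, b}` with `c` on one side forces every voter ranking `x` first
onto the other side: probability at most `2 · 2^{-2k}` for `a` and `2 · 2^{-k}` for `b`. The pair
`{a, b}` contributes at most `1`.
-/

open Finset

namespace WeakRanking

variable {A : Type*}

theorem tied_comm (r : WeakRanking A) (a b : A) : r.tied a b ↔ r.tied b a := and_comm

theorem not_strict_allTied {a b : A} : ¬ (allTied A).strict a b := fun h => h.2 trivial

end WeakRanking

theorem List.countP_eq_card_filter_get {α : Type*} (l : List α) (p : α → Bool) :
    l.countP p = #{i : Fin l.length | p (l.get i)} := by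
  conv_lhs => rw [← List.ofFn_get l, List.ofFn_eq_map, List.countP_map]
  rw [Finset.card_def, Finset.filter_val, ← Multiset.countP_eq_card_filter, Fin.univ_def]
  simp only [List.get_eq_getElem, Multiset.coe_countP, Bool.decide_eq_true]
  rfl

theorem card_filter_forall_imp_eq {ι : Type*} [Fintype ι] [DecidableEq ι] (P : ι → Prop)
    [DecidablePred P] (v : Bool) :
    #{β : ι → Bool | ∀ i, P i → β i = v} = 2 ^ #{i | ¬ P i} := by
  have h : ({β : ι → Bool | ∀ i, P i → β i = v} : Finset _)
      = Fintype.piFinset fun i => if P i then {v} else univ := by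
    ext β
    simp only [mem_filter, mem_univ, true_and, Fintype.mem_piFinset]
    refine forall_congr' fun i => ?_
    by_cases hi : P i <;> simp [hi]
  rw [h, Fintype.card_piFinset]
  simp [apply_ite, prod_ite]

section Split

variable {A : Type*} {m : ℕ}

theorem subProfile_sublist (σ : Profile A m) (β : Fin σ.length → Bool) (b : Bool) :
    (subProfile σ β b).Sublist σ := by
  unfold subProfile
  conv_rhs => rw [← List.ofFn_get σ, List.ofFn_eq_map]
  exact List.filter_sublist.map _

theorem countP_subProfile_eq_zero_iff {σ : Profile A m} {β : Fin σ.length → Bool} {b : Bool}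
    {p : Ranking A m → Bool} :
    (subProfile σ β b).countP p = 0 ↔ ∀ i, p (σ.get i) → β i ≠ b := by
  simp [List.countP_eq_zero, subProfile, imp_not_comm]

theorem card_splits_placing_all_on_side (σ : Profile A m) (p : Ranking A m → Bool) (v : Bool) :
    #{β : Fin σ.length → Bool | ∀ i, p (σ.get i) → β i = v}
      = 2 ^ (σ.length - σ.countP p) := by
  convert card_filter_forall_imp_eq (fun i => p (σ.get i) = true) v using 2
  · ext β; simp only [mem_filter]
  rw [filter_not, card_sdiff_of_subset (subset_univ _), card_univ,
    Fintype.card_fin, List.countP_eq_card_filter_get]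

theorem topCount_subProfile_eq_zero {σ : Profile A m} {c : A} (hc : topCount σ c = 0)
    (β : Fin σ.length → Bool) (b : Bool) : topCount (subProfile σ β b) c = 0 :=
  Nat.eq_zero_of_le_zero (hc ▸ (subProfile_sublist σ β b).countP_le)

end Split

section RandomSplit

variable {A : Type*} [Fintype A] {m : ℕ} (f : SWF A m) (σ : Profile A m)

theorem expDisagree_eq_sum_probD_probT :
    expDisagree f σ
      = (∑ p ∈ univ.offDiag, (probD f σ p.1 p.2 + probT f σ p.1 p.2 / 2)) / 2 := by
  unfold expDisagree KT probD probT
  simp only [natCast_card_filter, ← sum_div, sum_comm (s := univ.offDiag), sum_add_distrib]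
  ring

theorem probD_comm (a b : A) : probD f σ a b = probD f σ b a := by
  unfold probD
  simp only [or_comm]

theorem probT_comm (a b : A) : probT f σ a b = probT f σ b a := by
  unfold probT
  congr 3
  ext β
  simp only [mem_filter, WeakRanking.tied_comm _ a b]

theorem probD_add_half_probT_le_one (a b : A) : probD f σ a b + probT f σ a b / 2 ≤ 1 := by
  have hT_nonneg : 0 ≤ probT f σ a b := by unfold probT; positivity
  suffices probD f σ a b + probT f σ a b ≤ 1 by linarith
  unfold probD probT
  rw [← add_div, div_le_one (by positivity), ← Nat.cast_add,
    ← card_union_of_disjoint (disjoint_filter.2 fun β _ hD hT => ?disjoint)]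
  · calc _ ≤ (Fintype.card (Fin σ.length → Bool) : ℝ) := mod_cast card_le_univ _
      _ = 2 ^ σ.length := by simp
  case disjoint =>
    simp only [WeakRanking.strict, WeakRanking.tied] at hD hT
    tauto

theorem expDisagree_fin_three (f : SWF (Fin 3) m) (σ : Profile (Fin 3) m) :
    expDisagree f σ = (probD f σ 0 1 + probT f σ 0 1 / 2) + (probD f σ 0 2 + probT f σ 0 2 / 2)
      + (probD f σ 1 2 + probT f σ 1 2 / 2) := by
  have h : (univ : Finset (Fin 3)).offDiag = {(0, 1), (0, 2), (1, 0), (1, 2), (2, 0), (2, 1)} := by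
    decide
  rw [expDisagree_eq_sum_probD_probT, h]
  repeat rw [sum_insert (by decide)]
  rw [sum_singleton, probD_comm f σ 1 0, probT_comm f σ 1 0, probD_comm f σ 2 0,
    probT_comm f σ 2 0, probD_comm f σ 2 1, probT_comm f σ 2 1]
  ring

end RandomSplit

section Plurality

variable {A : Type*} {m : ℕ} (hm : 2 ≤ m)

theorem totalScore_pluralityVec (σ : Profile A m) (a : A) :
    totalScore (pluralityVec m hm) σ a = topCount σ a := by
  induction σ with
  | nil => simp [totalScore, topCount]
  | cons r σ ih =>
    simp only [totalScore, topCount, List.map_cons, List.sum_cons, List.countP_cons] at ih ⊢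
    rw [ih]
    by_cases h : (r a).val = 0 <;> simp [pluralityVec, h, add_comm]

theorem not_strict_applySplit_plurality {σ : Profile A m} {c : A} (hc : topCount σ c = 0)
    (x : A) :
    ¬ (applySplit (posSWF (pluralityVec m hm)) σ).strict c x := by
  unfold applySplit
  split_ifs
  · exact WeakRanking.not_strict_allTied
  · intro h
    apply h.2
    simp only [posSWF, totalScore_pluralityVec, hc, CharP.cast_eq_zero]
    positivity

theorem topCount_eq_zero_of_tied_applySplit_plurality {σ : Profile A m} {c x : A}
    (hc : topCount σ c = 0) (h : (applySplit (posSWF (pluralityVec m hm)) σ).tied x c) :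
    topCount σ x = 0 := by
  unfold applySplit at h
  split_ifs at h with hσ
  · simp [hσ, topCount]
  · simpa [posSWF, WeakRanking.tied, totalScore_pluralityVec, hc] using h.2

end Plurality

section PluralitySplit

variable {A : Type*} [Fintype A] {m : ℕ} (hm : 2 ≤ m) {σ : Profile A m} {c : A}

theorem probD_plurality_eq_zero (hc : topCount σ c = 0) (x : A) :
    probD (posSWF (pluralityVec m hm)) σ x c = 0 := by
  have h β b := not_strict_applySplit_plurality hm (topCount_subProfile_eq_zero hc β b) x
  simp [probD, h]

theorem probT_plurality_le (hc : topCount σ c = 0) (x : A) :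
    probT (posSWF (pluralityVec m hm)) σ x c ≤ 2 * (1 / 2) ^ topCount σ x := by
  set n := σ.length
  set t := topCount σ x
  have h_side (b : Bool) :
      #{β : Fin n → Bool |
          (applySplit (posSWF (pluralityVec m hm)) (subProfile σ β b)).tied x c}
        ≤ 2 ^ (n - t) := by
    refine (card_le_card fun β hβ => ?_).trans_eq
      (card_splits_placing_all_on_side σ (fun r => (r x).val == 0) (!b))
    rw [mem_filter] at hβ ⊢
    have h := topCount_eq_zero_of_tied_applySplit_plurality hm
      (topCount_subProfile_eq_zero hc β b) hβ.2
    rw [topCount, countP_subProfile_eq_zero_iff] at h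
    exact ⟨mem_univ _, fun i hi => by cases b <;> simpa using h i hi⟩
  have h_pow : (2 : ℝ) ^ n = 2 ^ (n - t) * 2 ^ t := by
    rw [← pow_add, Nat.sub_add_cancel (show t ≤ n from List.countP_le_length)]
  unfold probT
  rw [filter_or]
  calc (#(_ ∪ _) : ℝ) / 2 ^ n ≤ (2 ^ (n - t) + 2 ^ (n - t)) / 2 ^ n := by
        gcongr
        exact_mod_cast (card_union_le _ _).trans (add_le_add (h_side true) (h_side false))
    _ = 2 * (1 / 2) ^ t := by
        rw [h_pow, div_pow, one_pow]
        field_simp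
        ring

end PluralitySplit

theorem topCount_sigmaK_zero (k : ℕ) : topCount (sigmaK k) 0 = 2 * k := by
  simp [topCount, sigmaK, List.countP_replicate, rABC, rACB, rBCA, two_mul]

theorem topCount_sigmaK_one (k : ℕ) : topCount (sigmaK k) 1 = k := by
  simp [topCount, sigmaK, List.countP_replicate, rABC, rACB, rBCA]

theorem topCount_sigmaK_two (k : ℕ) : topCount (sigmaK k) 2 = 0 := by
  simp [topCount, sigmaK, List.countP_replicate, rABC, rACB, rBCA]

/-- on the example profile (k ≥ 2), the expected Kendall-Tau disagreement of
plurality across a random split is at most `1 + 2^{-2k} + 2^{-k} ≤ 1.3125`. -/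
theorem plurality_disagreement_bound (k : ℕ) (hk : 2 ≤ k) :
    expDisagree (posSWF (pluralityVec 3 (by norm_num))) (sigmaK k)
        ≤ 1 + (1 / 2 : ℝ) ^ (2 * k) + (1 / 2 : ℝ) ^ k ∧
    1 + (1 / 2 : ℝ) ^ (2 * k) + (1 / 2 : ℝ) ^ k ≤ 1.3125 := by
  have hc := topCount_sigmaK_two k
  have hab := probD_add_half_probT_le_one (posSWF (pluralityVec 3 (by norm_num))) (sigmaK k) 0 1
  have hac := probT_plurality_le (by norm_num) hc 0
  have hbc := probT_plurality_le (by norm_num) hc 1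
  rw [topCount_sigmaK_zero] at hac
  rw [topCount_sigmaK_one] at hbc
  constructor
  · rw [expDisagree_fin_three, probD_plurality_eq_zero _ hc, probD_plurality_eq_zero _ hc]
    linarith
  · have h2k : (1 / 2 : ℝ) ^ (2 * k) ≤ (1 / 2) ^ 4 :=
      pow_le_pow_of_le_one (by norm_num) (by norm_num) (by omega)
    have hk' : (1 / 2 : ℝ) ^ k ≤ (1 / 2) ^ 2 :=
      pow_le_pow_of_le_one (by norm_num) (by norm_num) hk
    norm_num at h2k hk' ⊢
    linarith
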